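/- arXiv:2407.01443 — 3 statements merged into one kernel-verified Lean document; each statement's English description precedes it below -/
import Mathlib

section
/- The boundary stencil of the fourth-order mimetic gradient is fourth-order accurate: for f ∈ C⁵, (1/Δx)[ −(352/105) f(0) + (35/8) f(Δx/2) − (35/24) f(3Δx/2) + (21/40) f(5Δx/2) − (5/56) f(7Δx/2) ] = f′(0) + O(Δx⁴). -/
/-!
The weights on the nodes `0, h/2, 3h/2, 5h/2, 7h/2` are chosen so that the stencil returns
exactly `h p'(0)` for every polynomial `p` of degree at most four. Subtracting the
degree-four Taylor polynomial of `f` at `0` therefore leaves only Taylor remainders, each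
`O(h⁵)` by the Lagrange bound; dividing by `h` gives the `O(h⁴)` error.
-/

open Finset Set

noncomputable def mimeticBoundaryStencil (f : ℝ → ℝ) (h : ℝ) : ℝ :=
  -(352/105) * f 0 + (35/8) * f (h/2) - (35/24) * f (3*h/2)
    + (21/40) * f (5*h/2) - (5/56) * f (7*h/2)

lemma mimeticBoundaryStencil_sub (f g : ℝ → ℝ) (h : ℝ) :
    mimeticBoundaryStencil (f - g) h = mimeticBoundaryStencil f h - mimeticBoundaryStencil g h := by
  simp only [mimeticBoundaryStencil, Pi.sub_apply]
  ring

lemma mimeticBoundaryStencil_quartic (c : ℕ → ℝ) (h : ℝ) :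
    mimeticBoundaryStencil (fun y => ∑ k ∈ range 5, c k * y ^ k) h = h * c 1 := by
  simp only [mimeticBoundaryStencil, sum_range_succ, sum_range_zero]
  ring

lemma mimeticBoundaryStencil_taylorWithinEval (f : ℝ → ℝ) (s : Set ℝ) (h : ℝ) :
    mimeticBoundaryStencil (taylorWithinEval f 4 s 0) h = h * iteratedDerivWithin 1 f s 0 := by
  have hT : taylorWithinEval f 4 s 0 =
      fun y => ∑ k ∈ range 5, ((k.factorial : ℝ)⁻¹ * iteratedDerivWithin k f s 0) * y ^ k := by
    funext y
    simp only [taylor_within_apply, sub_zero, smul_eq_mul]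
    exact sum_congr rfl fun k _ => by ring
  rw [hT, mimeticBoundaryStencil_quartic]
  simp

-- `875/8 = ∑ |wᵢ| (xᵢ/h)⁵` over the weights `wᵢ` and nodes `xᵢ` of the stencil.
lemma abs_mimeticBoundaryStencil_le {g : ℝ → ℝ} {C h : ℝ} (hh : 0 ≤ h)
    (hg : ∀ y ∈ Icc 0 (7*h/2), |g y| ≤ C * y ^ 5) :
    |mimeticBoundaryStencil g h| ≤ 875/8 * C * h ^ 5 := by
  have h0 := abs_le.mp (hg 0 ⟨le_rfl, by linarith⟩)
  have h1 := abs_le.mp (hg (h/2) ⟨by linarith, by linarith⟩)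
  have h2 := abs_le.mp (hg (3*h/2) ⟨by linarith, by linarith⟩)
  have h3 := abs_le.mp (hg (5*h/2) ⟨by linarith, by linarith⟩)
  have h4 := abs_le.mp (hg (7*h/2) ⟨by linarith, by linarith⟩)
  rw [abs_le, mimeticBoundaryStencil]
  constructor <;> nlinarith [h0.1, h0.2, h1.1, h1.2, h2.1, h2.2, h3.1, h3.2, h4.1, h4.2]

/-- The boundary stencil of the fourth-order mimetic gradient is
fourth-order accurate at the boundary `x = 0`. -/
theorem stmt_7 (f : ℝ → ℝ) (hf : ContDiff ℝ 5 f) :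
    ∃ C > (0:ℝ), ∃ δ > (0:ℝ), ∀ Δx : ℝ, 0 < Δx → Δx < δ →
      |(1/Δx) * (-(352/105) * f 0 + (35/8) * f (Δx/2) - (35/24) * f (3*Δx/2)
          + (21/40) * f (5*Δx/2) - (5/56) * f (7*Δx/2))
        - deriv f 0| ≤ C * Δx^4 := by
  set s := Icc (0:ℝ) (7/2)
  obtain ⟨C, hC⟩ := exists_taylor_mean_remainder_bound (n := 4) (by norm_num : (0:ℝ) ≤ 7/2)
    (by exact_mod_cast hf.contDiffOn)
  have hderiv : iteratedDerivWithin 1 f s 0 = deriv f 0 := by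
    rw [iteratedDerivWithin_one]
    exact (hf.differentiable (by norm_num)).differentiableAt.derivWithin
      (uniqueDiffOn_Icc (by norm_num) 0 ⟨le_rfl, by norm_num⟩)
  refine ⟨875/8 * max C 1, by positivity, 1, one_pos, fun Δx hΔ hΔ1 => ?_⟩
  have hremainder : |mimeticBoundaryStencil (f - taylorWithinEval f 4 s 0) Δx|
      ≤ 875/8 * C * Δx ^ 5 :=
    abs_mimeticBoundaryStencil_le hΔ.le fun y hy => by
      simpa using hC y ⟨hy.1, by linarith [hy.2]⟩
  rw [mimeticBoundaryStencil_sub, mimeticBoundaryStencil_taylorWithinEval, hderiv] at hremainder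
  calc |(1/Δx) * mimeticBoundaryStencil f Δx - deriv f 0|
      = |mimeticBoundaryStencil f Δx - Δx * deriv f 0| / Δx := by
        rw [eq_div_iff hΔ.ne', ← abs_of_pos hΔ, ← abs_mul, abs_of_pos hΔ]
        congr 1
        field_simp
    _ ≤ 875/8 * C * Δx ^ 5 / Δx := by gcongr
    _ = 875/8 * C * Δx ^ 4 := by field_simp
    _ ≤ 875/8 * max C 1 * Δx ^ 4 := by gcongr; exact le_max_left C 1
end

section
/- Semi-discrete energy conservation: let D̃, G̃ be linear operators on finite-dimensional spaces and J > 0 a positive diagonal matrix, and suppose the curvilinear discrete product rule D̃(p ⊙ V) = p ⊙ D̃ V + ⟨G̃ p, V⟩ holds pointwise. If p(t), V(t) solve ṗ = −(1/(2J)) D̃ V and V̇ = −(1/J) G̃ p, then pointwise d/dt [ p_i² + (1/2)⟨V_i, V_i⟩ ] = −(1/J_i) (D̃(p V))_i. -/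
/-- Dot product on ℝ². -/
def dot2 (a b : ℝ × ℝ) : ℝ := a.1 * b.1 + a.2 * b.2

lemma dot2_comm (a b : ℝ × ℝ) : dot2 a b = dot2 b a := by
  simp only [dot2]; ring

lemma dot2_smul_left (c : ℝ) (a b : ℝ × ℝ) : dot2 (c • a) b = c * dot2 a b := by
  simp only [dot2, Prod.smul_fst, Prod.smul_snd, smul_eq_mul]; ring

section

variable {𝕜 E F : Type*} [NontriviallyNormedField 𝕜] [NormedAddCommGroup E] [NormedSpace 𝕜 E]
  [NormedAddCommGroup F] [NormedSpace 𝕜 F] {u : 𝕜 → E × F} {u' : E × F} {t : 𝕜}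

theorem HasDerivAt.fst (hu : HasDerivAt u u' t) : HasDerivAt (fun s => (u s).1) u'.1 t :=
  (ContinuousLinearMap.fst 𝕜 E F).hasFDerivAt.comp_hasDerivAt t hu

theorem HasDerivAt.snd (hu : HasDerivAt u u' t) : HasDerivAt (fun s => (u s).2) u'.2 t :=
  (ContinuousLinearMap.snd 𝕜 E F).hasFDerivAt.comp_hasDerivAt t hu

end

theorem HasDerivAt.dot2 {u v : ℝ → ℝ × ℝ} {u' v' : ℝ × ℝ} {t : ℝ}
    (hu : HasDerivAt u u' t) (hv : HasDerivAt v v' t) :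
    HasDerivAt (fun s => dot2 (u s) (v s)) (dot2 u' (v t) + dot2 (u t) v') t := by
  refine ((hu.fst.fun_mul hv.fst).add (hu.snd.fun_mul hv.snd)).congr_deriv ?_
  simp only [_root_.dot2]
  ring

theorem stmt_9_general (N : ℕ)
    (Dt : ((Fin N → ℝ × ℝ)) →ₗ[ℝ] (Fin N → ℝ))      -- curvilinear divergence D̃
    (Gt : ((Fin N → ℝ)) →ₗ[ℝ] (Fin N → ℝ × ℝ))      -- curvilinear gradient G̃
    (J : Fin N → ℝ)
    (hprod : ∀ (f : Fin N → ℝ) (w : Fin N → ℝ × ℝ) (i : Fin N),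
      Dt (fun k => f k • w k) i = f i * Dt w i + dot2 (Gt f i) (w i))
    (p : ℝ → Fin N → ℝ) (V : ℝ → Fin N → ℝ × ℝ)
    (hp : ∀ (t : ℝ) (i : Fin N),
      HasDerivAt (fun s => p s i) (-(1/(2 * J i)) * Dt (V t) i) t)
    (hV : ∀ (t : ℝ) (i : Fin N),
      HasDerivAt (fun s => V s i) ((-(1/(J i))) • Gt (p t) i) t) :
    ∀ (t : ℝ) (i : Fin N),
      HasDerivAt (fun s => (p s i)^2 + (1/2) * dot2 (V s i) (V s i))
        (-(1/(J i)) * Dt (fun k => p t k • V t k) i) t := by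
  intro t i
  have hEnergy := ((hp t i).fun_pow 2).add (((hV t i).dot2 (hV t i)).const_mul (1/2))
  refine hEnergy.congr_deriv ?_
  rw [hprod, dot2_comm (V t i), dot2_smul_left]
  ring

/-- Semi-discrete pointwise energy identity for the curvilinear acoustic
system. -/
theorem stmt_9 (N : ℕ)
    (Dt : ((Fin N → ℝ × ℝ)) →ₗ[ℝ] (Fin N → ℝ))      -- curvilinear divergence D̃
    (Gt : ((Fin N → ℝ)) →ₗ[ℝ] (Fin N → ℝ × ℝ))      -- curvilinear gradient G̃
    (J : Fin N → ℝ) (hJ : ∀ i, 0 < J i)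
    (hprod : ∀ (f : Fin N → ℝ) (w : Fin N → ℝ × ℝ) (i : Fin N),
      Dt (fun k => f k • w k) i = f i * Dt w i + dot2 (Gt f i) (w i))
    (p : ℝ → Fin N → ℝ) (V : ℝ → Fin N → ℝ × ℝ)
    (hp : ∀ (t : ℝ) (i : Fin N),
      HasDerivAt (fun s => p s i) (-(1/(2 * J i)) * Dt (V t) i) t)
    (hV : ∀ (t : ℝ) (i : Fin N),
      HasDerivAt (fun s => V s i) ((-(1/(J i))) • Gt (p t) i) t) :
    ∀ (t : ℝ) (i : Fin N),
      HasDerivAt (fun s => (p s i)^2 + (1/2) * dot2 (V s i) (V s i))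
        (-(1/(J i)) * Dt (fun k => p t k • V t k) i) t :=
  stmt_9_general N Dt Gt J hprod p V hp hV
end

section
/- If D, G, P, Q satisfy ⟨D v, f⟩_Q + ⟨G f, v⟩_P = f_{m+1} v_m − f_0 v_0 for all f ∈ ℝ^{m+2}, v ∈ ℝ^{m+1}, with P, Q symmetric positive definite, then the mimetic Laplacian restricted to zero-boundary scalars, L₀ = D G composed with the restriction/extension by zero to interior indices, is self-adjoint and negative semidefinite with respect to the Q-weighted inner product: ⟨L₀ f, f⟩_Q = −⟨G f, G f⟩_P ≤ 0 for all f with f_0 = f_{m+1} = 0. -/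
open Matrix

theorem stmt_19_general (m : ℕ)
    (D : Matrix (Fin (m+2)) (Fin (m+1)) ℝ)
    (G : Matrix (Fin (m+1)) (Fin (m+2)) ℝ)
    (Q : Matrix (Fin (m+2)) (Fin (m+2)) ℝ)
    (P : Matrix (Fin (m+1)) (Fin (m+1)) ℝ)
    (hPpd : P.PosDef)
    (hibp : ∀ (f : Fin (m+2) → ℝ) (v : Fin (m+1) → ℝ),
      (D.mulVec v) ⬝ᵥ (Q.mulVec f) + (G.mulVec f) ⬝ᵥ (P.mulVec v)
        = f (Fin.last (m+1)) * v (Fin.last m) - f 0 * v 0) :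
    ∀ f : Fin (m+2) → ℝ, f 0 = 0 → f (Fin.last (m+1)) = 0 →
      (D.mulVec (G.mulVec f)) ⬝ᵥ (Q.mulVec f)
          = -((G.mulVec f) ⬝ᵥ (P.mulVec (G.mulVec f))) ∧
      (D.mulVec (G.mulVec f)) ⬝ᵥ (Q.mulVec f) ≤ 0 := by
  intro f h0 hlast
  have hselfAdj : (D.mulVec (G.mulVec f)) ⬝ᵥ (Q.mulVec f)
      = -((G.mulVec f) ⬝ᵥ (P.mulVec (G.mulVec f))) := by
    have hibp_Gf := hibp f (G.mulVec f)
    rw [h0, hlast, zero_mul, zero_mul, sub_zero] at hibp_Gf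
    linarith
  have henergy_nonneg : 0 ≤ (G.mulVec f) ⬝ᵥ (P.mulVec (G.mulVec f)) := by
    simpa using hPpd.posSemidef.dotProduct_mulVec_nonneg (G.mulVec f)
  exact ⟨hselfAdj, hselfAdj ▸ neg_nonpos.mpr henergy_nonneg⟩

/-- The mimetic Laplacian restricted to zero-boundary scalar fields is
self-adjoint and negative semidefinite with respect to the `Q`-weighted
inner product. -/
theorem stmt_19 (m : ℕ)
    (D : Matrix (Fin (m+2)) (Fin (m+1)) ℝ)
    (G : Matrix (Fin (m+1)) (Fin (m+2)) ℝ)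
    (Q : Matrix (Fin (m+2)) (Fin (m+2)) ℝ)
    (P : Matrix (Fin (m+1)) (Fin (m+1)) ℝ)
    (hQpd : Q.PosDef) (hPpd : P.PosDef)
    (hibp : ∀ (f : Fin (m+2) → ℝ) (v : Fin (m+1) → ℝ),
      (D.mulVec v) ⬝ᵥ (Q.mulVec f) + (G.mulVec f) ⬝ᵥ (P.mulVec v)
        = f (Fin.last (m+1)) * v (Fin.last m) - f 0 * v 0) :
    ∀ f : Fin (m+2) → ℝ, f 0 = 0 → f (Fin.last (m+1)) = 0 →
      (D.mulVec (G.mulVec f)) ⬝ᵥ (Q.mulVec f)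
          = -((G.mulVec f) ⬝ᵥ (P.mulVec (G.mulVec f))) ∧
      (D.mulVec (G.mulVec f)) ⬝ᵥ (Q.mulVec f) ≤ 0 :=
  stmt_19_general m D G Q P hPpd hibp
end
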